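/- Let g be a complex finite-dimensional simple Lie algebra of classical type, i ∈ I, m ∈ Z_+, and 0 ≤ r ≤ m. Then there exists a canonical homomorphism of graded g[t]-modules KR(mω_i) → KR(rω_i) ⊗ KR((m−r)ω_i) sending v_{i,m} to v_{i,r} ⊗ v_{i,m−r}. -/

import Mathlib

open scoped TensorProduct DirectSum Pointwise BigOperators

namespace KRPaper

/-- The classical Cartan types `A`, `B`, `C`, `D`. -/
inductive ClassicalType : Type
  | A | B | C | D
deriving DecidableEq

/-- The coefficient `ε_i(θ)` of the simple root `α_i` in the highest root `θ`,
for a simple Lie algebra of the given classical type and rank. -/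
def epsTheta : ClassicalType → ℕ → ℕ → ℕ
  | ClassicalType.A, _, _ => 1
  | ClassicalType.B, _, i => if i = 1 then 1 else 2
  | ClassicalType.C, n, i => if i = n then 1 else 2
  | ClassicalType.D, n, i => if i = 1 ∨ i = n - 1 ∨ i = n then 1 else 2

/-- `ď_i = 2/(α_i,α_i)` for a simple Lie algebra of the given classical type and rank,
with the invariant form normalized so that `(θ,θ) = 2`. -/
def dcheck : ClassicalType → ℕ → ℕ → ℕ
  | ClassicalType.B, n, i => if i = n then 2 else 1
  | ClassicalType.C, n, i => if i = n then 1 else 2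
  | _, _, _ => 1

/-- The data of a complex finite-dimensional simple Lie algebra of classical type:
a Cartan subalgebra `h`, simple roots `α i` (`i ∈ {1,…,n}`), fundamental weights `ω i`
(with `ω 0 = 0`), the finite set `Rplus` of positive roots, the highest root `θ`,
the normalized invariant form `B` on `h*` with `B θ θ = 2`, and for each positive root `β`
root vectors `xp β ∈ g_β`, `xm β ∈ g_{-β}` and the coroot `hc β ∈ h` with the standard
`sl₂`-relations. -/
structure LieData where
  ctype : ClassicalType
  n : ℕ
  npos : 0 < n
  g : Type
  [lieRing : LieRing g]
  [lieAlg : LieAlgebra ℂ g]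
  [finDim : FiniteDimensional ℂ g]
  simple : LieAlgebra.IsSimple ℂ g
  h : LieSubalgebra ℂ g
  cartan : h.IsCartanSubalgebra
  α : ℕ → Module.Dual ℂ h
  ω : ℕ → Module.Dual ℂ h
  ω_zero : ω 0 = 0
  Rplus : Finset (Module.Dual ℂ h)
  α_mem : ∀ i ∈ Finset.Icc 1 n, α i ∈ Rplus
  θ : Module.Dual ℂ h
  θ_mem : θ ∈ Rplus
  θ_eq : θ = ∑ i ∈ Finset.Icc 1 n, (epsTheta ctype n i : ℂ) • α i
  B : Module.Dual ℂ h →ₗ[ℂ] Module.Dual ℂ h →ₗ[ℂ] ℂ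
  B_symm : ∀ lam mu, B lam mu = B mu lam
  B_theta : B θ θ = 2
  B_dcheck : ∀ i ∈ Finset.Icc 1 n, (dcheck ctype n i : ℂ) * B (α i) (α i) = 2
  xp : Module.Dual ℂ h → g
  xm : Module.Dual ℂ h → g
  hc : Module.Dual ℂ h → h
  xp_ne : ∀ β ∈ Rplus, xp β ≠ 0
  xm_ne : ∀ β ∈ Rplus, xm β ≠ 0
  wt_xp : ∀ β ∈ Rplus, ∀ H : h, ⁅(H : g), xp β⁆ = β H • xp β
  wt_xm : ∀ β ∈ Rplus, ∀ H : h, ⁅(H : g), xm β⁆ = -(β H) • xm β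
  sl2 : ∀ β ∈ Rplus, ⁅xp β, xm β⁆ = (hc β : g)
  pairing2 : ∀ β ∈ Rplus, β (hc β) = 2
  ω_pair : ∀ i ∈ Finset.Icc 1 n, ∀ j ∈ Finset.Icc 1 n, ω i (hc (α j)) = if i = j then 1 else 0

attribute [instance] LieData.lieRing LieData.lieAlg LieData.finDim

/-- The positive cone `Q^+` of the root lattice: the `ℕ`-span of the simple roots. -/
def LieData.Qplus (D : LieData) : Set (Module.Dual ℂ D.h) :=
  {η | ∃ c : ℕ → ℕ, η = ∑ i ∈ Finset.Icc 1 D.n, (c i : ℂ) • D.α i}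

/-- A representation of a complex Lie algebra `g` on a complex vector space. -/
structure Rep (g : Type) [LieRing g] [LieAlgebra ℂ g] where
  V : Type
  [addCommGroup : AddCommGroup V]
  [modV : Module ℂ V]
  ρ : g →ₗ[ℂ] Module.End ℂ V
  ρ_bracket : ∀ x y : g, ρ ⁅x, y⁆ = ρ x * ρ y - ρ y * ρ x

attribute [instance] Rep.addCommGroup Rep.modV

/-- An irreducible finite-dimensional representation. -/
def IsIrrFD {g : Type} [LieRing g] [LieAlgebra ℂ g] (M : Rep g) : Prop :=
  FiniteDimensional ℂ M.V ∧ (∃ v : M.V, v ≠ 0) ∧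
    ∀ U : Submodule ℂ M.V, (∀ x : g, ∀ u ∈ U, M.ρ x u ∈ U) → U = ⊥ ∨ U = ⊤

/-- `M` is (a copy of) the irreducible finite-dimensional `g`-module `V(lam)` with
highest weight `lam`. -/
def LieData.IsHW (D : LieData) (M : Rep D.g) (lam : Module.Dual ℂ D.h) : Prop :=
  IsIrrFD M ∧
    ∃ v : M.V, v ≠ 0 ∧ (∀ H : D.h, M.ρ (H : D.g) v = lam H • v) ∧
      ∀ β ∈ D.Rplus, M.ρ (D.xp β) v = 0

/-- A module for the current algebra `g[t] = g ⊗ ℂ[t]`: the operator `ρ r x` is the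
action of `x ⊗ t^r`. -/
structure CRep (g : Type) [LieRing g] [LieAlgebra ℂ g] where
  V : Type
  [addCommGroup : AddCommGroup V]
  [modV : Module ℂ V]
  ρ : ℕ → g →ₗ[ℂ] Module.End ℂ V
  ρ_bracket : ∀ (r s : ℕ) (x y : g),
    ρ (r + s) ⁅x, y⁆ = ρ r x * ρ s y - ρ s y * ρ r x

attribute [instance] CRep.addCommGroup CRep.modV

/-- A `ℤ₊`-graded module for the current algebra `g[t]`. -/
structure GCRep (g : Type) [LieRing g] [LieAlgebra ℂ g] extends CRep g where
  gr : ℕ → Submodule ℂ V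
  internal : DirectSum.IsInternal gr
  map_gr : ∀ (r : ℕ) (x : g) (s : ℕ), ∀ v ∈ gr s, ρ r x v ∈ gr (s + r)

/-- The action of `g = g ⊗ t⁰` on the graded piece `gr s` of a graded `g[t]`-module. -/
def GCRep.grAct {g : Type} [LieRing g] [LieAlgebra ℂ g] (K : GCRep g) (s : ℕ)
    (x : g) (w : K.gr s) : K.gr s :=
  ⟨K.ρ 0 x w, K.map_gr 0 x s w w.2⟩

/-- `v` generates the `g[t]`-module `M` (i.e. `M = U(g[t])·v`). -/
def genTop {g : Type} [LieRing g] [LieAlgebra ℂ g] (M : CRep g) (v : M.V) : Prop :=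
  ∀ U : Submodule ℂ M.V, v ∈ U → (∀ (r : ℕ) (x : g), ∀ u ∈ U, M.ρ r x u ∈ U) → U = ⊤

/-- The defining relations of the Kirillov–Reshetikhin module `KR(mω_i)` for a vector `v`:
`n⁺[t]·v = 0`, `H·v = mω_i(H)v` and `(H ⊗ t^r)·v = 0` for `r ≥ 1`,
`(x⁻_{α_i})^{m+1}·v = 0`, `(x⁻_{α_i} ⊗ t)·v = 0`, and `x⁻_{α_j}·v = 0` for `j ≠ i`. -/
def KRrel (D : LieData) (i m : ℕ) (M : CRep D.g) (v : M.V) : Prop :=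
  (∀ β ∈ D.Rplus, ∀ r : ℕ, M.ρ r (D.xp β) v = 0) ∧
  (∀ H : D.h, M.ρ 0 (H : D.g) v = ((m : ℂ) * D.ω i H) • v) ∧
  (∀ H : D.h, ∀ r : ℕ, 0 < r → M.ρ r (H : D.g) v = 0) ∧
  ((M.ρ 0 (D.xm (D.α i)) ^ (m + 1)) v = 0) ∧
  (M.ρ 1 (D.xm (D.α i)) v = 0) ∧
  (∀ j ∈ Finset.Icc 1 D.n, j ≠ i → M.ρ 0 (D.xm (D.α j)) v = 0)

/-- The Kirillov–Reshetikhin module `KR(mω_i)`: the cyclic graded `g[t]`-module generated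
by a vector `v` subject exactly to the relations `KRrel` (universality makes it the
maximal such cyclic module). -/
structure KRModule (D : LieData) (i m : ℕ) extends GCRep D.g where
  v : V
  v_ne : v ≠ 0
  v_gr : v ∈ gr 0
  rel : KRrel D i m toCRep v
  cyclic : genTop toCRep v
  universal : ∀ (N : CRep D.g) (w : N.V), KRrel D i m N w →
    ∃ f : V →ₗ[ℂ] N.V, f v = w ∧
      ∀ (r : ℕ) (x : D.g) (u : V), f (ρ r x u) = N.ρ r x (f u)

/-- The set `P^+(i,1)` of the paper. -/
noncomputable def LieData.P1 (D : LieData) (i : ℕ) : Finset (Module.Dual ℂ D.h) := by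
  classical
  exact if epsTheta D.ctype D.n i = dcheck D.ctype D.n i then {D.ω i}
    else (Finset.range (i / 2 + 1)).image fun j => D.ω (i - 2 * j)

/-- The set `P^+(i,2)` of the paper in the cases where `ď_i = 2`. -/
noncomputable def LieData.P2 (D : LieData) (i : ℕ) : Finset (Module.Dual ℂ D.h) := by
  classical
  exact if D.ctype = ClassicalType.C then (Finset.range (i + 1)).image fun j => (2 : ℂ) • D.ω j
    else {(2 : ℂ) • D.ω D.n} ∪ (Finset.range (D.n / 2)).image fun j => D.ω (D.n - 2 * (j + 1))

/-- The sets `P^+(i,m)` for `0 ≤ m ≤ ď_i`. -/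
noncomputable def LieData.Pbase (D : LieData) (i m : ℕ) : Finset (Module.Dual ℂ D.h) :=
  if m = 0 then {0} else if m = 1 then D.P1 i else D.P2 i

/-- The set `P^+(i,m)`, defined by `P^+(i,m) = P^+(i,ď_i) + P^+(i,m-ď_i)` for `m > ď_i`
(here in the equivalent closed form using `m = ď_i·(m/ď_i) + m % ď_i`). -/
noncomputable def LieData.Pplus (D : LieData) (i m : ℕ) : Finset (Module.Dual ℂ D.h) := by
  classical
  exact D.Pbase i (m % dcheck D.ctype D.n i) +
    (m / dcheck D.ctype D.n i) • D.Pbase i (dcheck D.ctype D.n i)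

/-- The enumeration `μ_0, …, μ_k` of `P^+(i,ď_i)` with `μ_j - μ_{j+1} ∈ R^+` and
`μ_j - μ_{j+2} ∈ Q^+ \ R^+`. -/
structure KREnum (D : LieData) (i : ℕ) where
  k : ℕ
  μ : ℕ → Module.Dual ℂ D.h
  enum : (D.Pplus i (dcheck D.ctype D.n i) : Set (Module.Dual ℂ D.h)) = μ '' {j | j ≤ k}
  μ_inj : ∀ a ≤ k, ∀ b ≤ k, μ a = μ b → a = b
  μ_zero : μ 0 = (dcheck D.ctype D.n i : ℂ) • D.ω i
  step : ∀ j, j + 1 ≤ k → μ j - μ (j + 1) ∈ D.Rplus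
  step2 : ∀ j, j + 2 ≤ k → μ j - μ (j + 2) ∈ D.Qplus ∧ μ j - μ (j + 2) ∉ D.Rplus

/-- `j` is a reduced expression `μ = m₁ω_i + μ_{j 0} + ⋯ + μ_{j (m₀-1)}` of
`μ ∈ P^+(i,m)`: each `j r` is minimal such that the partial difference stays in the
appropriate set `P^+(i, m - (r+1)ď_i)`. -/
def IsReducedExpr (D : LieData) (i m : ℕ) (E : KREnum D i) (j : ℕ → ℕ)
    (μ : Module.Dual ℂ D.h) : Prop :=
  (∀ r < m / dcheck D.ctype D.n i, j r ≤ E.k) ∧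
  μ = ((m % dcheck D.ctype D.n i : ℕ) : ℂ) • D.ω i +
      ∑ r ∈ Finset.range (m / dcheck D.ctype D.n i), E.μ (j r) ∧
  ∀ r < m / dcheck D.ctype D.n i,
    (μ - ∑ s ∈ Finset.range (r + 1), E.μ (j s))
        ∈ D.Pplus i (m - (r + 1) * dcheck D.ctype D.n i) ∧
    ∀ j' < j r, (μ - ∑ s ∈ Finset.range r, E.μ (j s)) - E.μ j'
        ∉ D.Pplus i (m - (r + 1) * dcheck D.ctype D.n i)

/-- `AbsVal D i m E μ s` says `|μ| = s`, i.e. `μ` has a reduced expression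
`μ = m₁ω_i + μ_{j_1} + ⋯ + μ_{j_{m₀}}` with `s = j_1 + ⋯ + j_{m₀}`. -/
def AbsVal (D : LieData) (i m : ℕ) (E : KREnum D i) (μ : Module.Dual ℂ D.h)
    (s : ℕ) : Prop :=
  ∃ j : ℕ → ℕ, IsReducedExpr D i m E j μ ∧
    s = ∑ r ∈ Finset.range (m / dcheck D.ctype D.n i), j r

/-- `p` is a `g`-module homomorphism `g ⊗ M → N`. -/
def IsEquivMap2 {g : Type} [LieRing g] [LieAlgebra ℂ g] (M N : Rep g)
    (p : g →ₗ[ℂ] M.V →ₗ[ℂ] N.V) : Prop :=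
  ∀ (y x : g) (v : M.V), N.ρ y (p x v) = p ⁅y, x⁆ v + p x (M.ρ y v)

/-- `q` is a `g`-module homomorphism `∧²(g) ⊗ M → N` (an alternating bilinear-in-`g`
equivariant map). -/
def IsEquivAlt3 {g : Type} [LieRing g] [LieAlgebra ℂ g] (M N : Rep g)
    (q : g →ₗ[ℂ] g →ₗ[ℂ] M.V →ₗ[ℂ] N.V) : Prop :=
  (∀ x v, q x x v = 0) ∧
  ∀ (y x₁ x₂ : g) (v : M.V),
    N.ρ y (q x₁ x₂ v) = q ⁅y, x₁⁆ x₂ v + q x₁ ⁅y, x₂⁆ v + q x₁ x₂ (M.ρ y v)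

/-- The action of an endomorphism `f` of `W` on `W^{⊗ m₀}` as a derivation
(i.e. `Σ_j 1 ⊗ ⋯ ⊗ f ⊗ ⋯ ⊗ 1`). -/
noncomputable def piDer (W : Type) [AddCommGroup W] [Module ℂ W] (m0 : ℕ)
    (f : Module.End ℂ W) : Module.End ℂ (⨂[ℂ] _ : Fin m0, W) :=
  ∑ j : Fin m0,
    PiTensorProduct.map (Function.update (fun _ : Fin m0 => (LinearMap.id : W →ₗ[ℂ] W)) j f)


/-- The tensor product of two current-algebra modules. -/
noncomputable def tensorCRep {g : Type} [LieRing g] [LieAlgebra ℂ g] (M N : CRep g) : CRep g where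
  V := M.V ⊗[ℂ] N.V
  ρ s := (LinearMap.rTensorHom N.V).comp (M.ρ s) + (LinearMap.lTensorHom M.V).comp (N.ρ s)
  ρ_bracket r s x y := by
    apply TensorProduct.ext'
    intro a b
    have h1 := M.ρ_bracket r s x y
    have h2 := N.ρ_bracket r s x y
    simp only [LinearMap.add_apply, LinearMap.coe_comp, Function.comp_apply,
      LinearMap.coe_rTensorHom, LinearMap.coe_lTensorHom, LinearMap.rTensor_tmul,
      LinearMap.lTensor_tmul, LinearMap.sub_apply, Module.End.mul_apply, h1, h2,
      TensorProduct.tmul_add, TensorProduct.add_tmul, TensorProduct.sub_tmul,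
      TensorProduct.tmul_sub, map_add, map_sub]
    abel

lemma tensorCRep_ρ {g : Type} [LieRing g] [LieAlgebra ℂ g] (M N : CRep g)
    (s : ℕ) (x : g) :
    (tensorCRep M N).ρ s x =
      LinearMap.rTensor N.V (M.ρ s x) + LinearMap.lTensor M.V (N.ρ s x) := rfl

lemma tensorCRep_ρ_tmul {g : Type} [LieRing g] [LieAlgebra ℂ g] (M N : CRep g)
    (s : ℕ) (x : g) (a : M.V) (b : N.V) :
    (tensorCRep M N).ρ s x (a ⊗ₜ[ℂ] b) = (M.ρ s x a) ⊗ₜ[ℂ] b + a ⊗ₜ[ℂ] (N.ρ s x b) := rfl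

lemma KRrel_tensor (D : LieData) (i m r : ℕ) (hr : r ≤ m)
    (K1 : KRModule D i r) (K2 : KRModule D i (m - r)) :
    KRrel D i m (tensorCRep K1.toCRep K2.toCRep) (K1.v ⊗ₜ[ℂ] K2.v) := by
  obtain ⟨h1p, h1h, h1ht, h1pow, h1t, h1j⟩ := K1.rel
  obtain ⟨h2p, h2h, h2ht, h2pow, h2t, h2j⟩ := K2.rel
  refine ⟨?_, ?_, ?_, ?_, ?_, ?_⟩
  · intro β hβ s
    rw [tensorCRep_ρ_tmul, h1p β hβ s, h2p β hβ s, TensorProduct.zero_tmul,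
      TensorProduct.tmul_zero, add_zero]
    rfl
  · intro H
    have key : (((r : ℂ) * D.ω i H) • K1.v) ⊗ₜ[ℂ] K2.v
          + K1.v ⊗ₜ[ℂ] ((((m - r : ℕ) : ℂ) * D.ω i H) • K2.v)
        = (((m : ℂ) * D.ω i H) • K1.v) ⊗ₜ[ℂ] K2.v := by
      simp only [← TensorProduct.smul_tmul', TensorProduct.tmul_smul]
      rw [← add_smul]
      congr 1
      rw [Nat.cast_sub hr]
      ring
    rw [tensorCRep_ρ_tmul, h1h H, h2h H]
    exact key
  · intro H s hs
    rw [tensorCRep_ρ_tmul, h1ht H s hs, h2ht H s hs, TensorProduct.zero_tmul,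
      TensorProduct.tmul_zero, add_zero]
    rfl
  · set A := K1.ρ 0 (D.xm (D.α i)) with hA
    set B := K2.ρ 0 (D.xm (D.α i)) with hB
    have hcomm : Commute (LinearMap.rTensor K2.V A) (LinearMap.lTensor K1.V B) := by
      show _ * _ = _ * _
      rw [Module.End.mul_eq_comp, Module.End.mul_eq_comp, LinearMap.rTensor_comp_lTensor,
        LinearMap.lTensor_comp_rTensor]
    have key : ((LinearMap.rTensor K2.V A + LinearMap.lTensor K1.V B) ^ (m + 1))
        (K1.v ⊗ₜ[ℂ] K2.v) = 0 := by
      rw [hcomm.add_pow, LinearMap.sum_apply]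
      apply Finset.sum_eq_zero
      intro k hk
      rw [Finset.mem_range] at hk
      have hkey : ((LinearMap.rTensor K2.V A ^ k) * (LinearMap.lTensor K1.V B ^ (m + 1 - k)))
          (K1.v ⊗ₜ[ℂ] K2.v) = 0 := by
        rw [Module.End.mul_apply, LinearMap.rTensor_pow, LinearMap.lTensor_pow,
          LinearMap.lTensor_tmul, LinearMap.rTensor_tmul]
        rcases le_or_gt k r with h | h
        · have hsplit : m + 1 - k = (r - k) + ((m - r) + 1) := by omega
          have hz : (B ^ (m + 1 - k)) K2.v = 0 := by
            rw [hsplit, pow_add, Module.End.mul_apply, h2pow, map_zero]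
          rw [hz, TensorProduct.tmul_zero]
        · have hsplit : k = (k - (r + 1)) + (r + 1) := by omega
          have hz : (A ^ k) K1.v = 0 := by
            rw [hsplit, pow_add, Module.End.mul_apply, h1pow, map_zero]
          rw [hz, TensorProduct.zero_tmul]
      rw [Module.End.mul_apply, Module.End.natCast_apply, map_nsmul, hkey, smul_zero]
    exact key
  · rw [tensorCRep_ρ_tmul, h1t, h2t, TensorProduct.zero_tmul, TensorProduct.tmul_zero,
      add_zero]
    rfl
  · intro j hj hne
    rw [tensorCRep_ρ_tmul, h1j j hj hne, h2j j hj hne, TensorProduct.zero_tmul,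
      TensorProduct.tmul_zero, add_zero]
    rfl

/-- For `0 ≤ r ≤ m` there is a canonical homomorphism of graded
`g[t]`-modules `KR(mω_i) → KR(rω_i) ⊗ KR((m-r)ω_i)` sending `v_{i,m}` to
`v_{i,r} ⊗ v_{i,m-r}`. -/
theorem statement3 (D : LieData) (i : ℕ) (hi : i ∈ Finset.Icc 1 D.n) (m r : ℕ)
    (hr : r ≤ m) (K : KRModule D i m) (K1 : KRModule D i r) (K2 : KRModule D i (m - r)) :
    ∃ f : K.V →ₗ[ℂ] K1.V ⊗[ℂ] K2.V,
      f K.v = K1.v ⊗ₜ[ℂ] K2.v ∧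
      (∀ (s : ℕ) (x : D.g) (u : K.V),
        f (K.ρ s x u) =
          (LinearMap.rTensor K2.V (K1.ρ s x) + LinearMap.lTensor K1.V (K2.ρ s x)) (f u)) ∧
      (∀ s : ℕ, ∀ u ∈ K.gr s,
        f u ∈ ⨆ p : {p : ℕ × ℕ // p.1 + p.2 = s},
          Submodule.map₂ (TensorProduct.mk ℂ K1.V K2.V) (K1.gr p.1.1) (K2.gr p.1.2)) := by
  classical
  obtain ⟨f0, hfv0, hf0⟩ := K.universal (tensorCRep K1.toCRep K2.toCRep) (K1.v ⊗ₜ[ℂ] K2.v)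
      (KRrel_tensor D i m r hr K1 K2)
  -- recast everything with the standard tensor-product instances
  let f : K.V →ₗ[ℂ] K1.V ⊗[ℂ] K2.V := f0
  have hfv : f K.v = K1.v ⊗ₜ[ℂ] K2.v := hfv0
  have hf : ∀ (t : ℕ) (x : D.g) (u : K.V),
      f (K.ρ t x u) =
        (LinearMap.rTensor K2.V (K1.ρ t x) + LinearMap.lTensor K1.V (K2.ρ t x)) (f u) := hf0
  -- the grading on the tensor product
  set G : ℕ → Submodule ℂ (K1.V ⊗[ℂ] K2.V) := fun s =>
    ⨆ p : {p : ℕ × ℕ // p.1 + p.2 = s},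
      Submodule.map₂ (TensorProduct.mk ℂ K1.V K2.V) (K1.gr p.1.1) (K2.gr p.1.2) with hG
  have hGmap : ∀ (t : ℕ) (x : D.g) (s : ℕ), ∀ y ∈ G s,
      (LinearMap.rTensor K2.V (K1.ρ t x) + LinearMap.lTensor K1.V (K2.ρ t x)) y
        ∈ G (s + t) := by
    intro t x s y hy
    have hle : Submodule.map
        (LinearMap.rTensor K2.V (K1.ρ t x) + LinearMap.lTensor K1.V (K2.ρ t x)) (G s)
        ≤ G (s + t) := by
      rw [hG, Submodule.map_iSup]
      apply iSup_le
      rintro ⟨⟨p1, p2⟩, hp⟩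
      rw [Submodule.map_le_iff_le_comap]
      refine Submodule.map₂_le.2 ?_
      intro a ha b hb
      rw [Submodule.mem_comap]
      have hab : (LinearMap.rTensor K2.V (K1.ρ t x) + LinearMap.lTensor K1.V (K2.ρ t x))
          (TensorProduct.mk ℂ K1.V K2.V a b)
          = (K1.ρ t x a) ⊗ₜ[ℂ] b + a ⊗ₜ[ℂ] (K2.ρ t x b) := by
        rw [LinearMap.add_apply, TensorProduct.mk_apply, LinearMap.rTensor_tmul,
          LinearMap.lTensor_tmul]
      rw [hab]
      refine Submodule.add_mem _ ?_ ?_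
      · exact le_iSup (fun p : {p : ℕ × ℕ // p.1 + p.2 = s + t} =>
            Submodule.map₂ (TensorProduct.mk ℂ K1.V K2.V) (K1.gr p.1.1) (K2.gr p.1.2))
          ⟨(p1 + t, p2), by simp at hp ⊢; omega⟩
          (Submodule.apply_mem_map₂ _ (K1.map_gr t x p1 a ha) hb)
      · exact le_iSup (fun p : {p : ℕ × ℕ // p.1 + p.2 = s + t} =>
            Submodule.map₂ (TensorProduct.mk ℂ K1.V K2.V) (K1.gr p.1.1) (K2.gr p.1.2))
          ⟨(p1, p2 + t), by simp at hp ⊢; omega⟩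
          (Submodule.apply_mem_map₂ _ ha (K2.map_gr t x p2 b hb))
    exact hle ⟨y, hy, rfl⟩
  -- projections onto the graded pieces of K
  set e := LinearEquiv.ofBijective (DirectSum.coeLinearMap K.gr) K.internal with he
  set π : ℕ → K.V →ₗ[ℂ] K.V := fun s =>
    (K.gr s).subtype ∘ₗ (DirectSum.component ℂ ℕ (fun j => (K.gr j : Submodule ℂ K.V)) s)
      ∘ₗ e.symm.toLinearMap with hπ
  have hπ_same : ∀ (s : ℕ) (u : K.V), u ∈ K.gr s → π s u = u := by
    intro s u hu
    have h := K.internal.ofBijective_coeLinearMap_of_mem hu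
    simp only [hπ, LinearMap.coe_comp, Function.comp_apply, LinearEquiv.coe_coe,
      Submodule.coe_subtype]
    rw [← DirectSum.apply_eq_component]
    rw [← he] at h
    rw [h]
  have hπ_ne : ∀ (s s' : ℕ), s' ≠ s → ∀ (u : K.V), u ∈ K.gr s' → π s u = 0 := by
    intro s s' hne u hu
    have h := K.internal.ofBijective_coeLinearMap_of_mem_ne hne hu
    simp only [hπ, LinearMap.coe_comp, Function.comp_apply, LinearEquiv.coe_coe,
      Submodule.coe_subtype]
    rw [← DirectSum.apply_eq_component]
    rw [← he] at h
    rw [h, Submodule.coe_zero]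
  -- the compatible submodule
  set W : ℕ → Submodule ℂ K.V := fun s => K.gr s ⊓ (G s).comap f with hW
  set U : Submodule ℂ K.V := ⨆ s, W s with hU
  have hWle : ∀ s, W s ≤ U := fun s => le_iSup W s
  have hvU : K.v ∈ U := by
    refine hWle 0 ⟨K.v_gr, ?_⟩
    show f K.v ∈ G 0
    rw [hfv]
    exact le_iSup (fun p : {p : ℕ × ℕ // p.1 + p.2 = 0} =>
        Submodule.map₂ (TensorProduct.mk ℂ K1.V K2.V) (K1.gr p.1.1) (K2.gr p.1.2))
      ⟨(0, 0), rfl⟩ (Submodule.apply_mem_map₂ _ K1.v_gr K2.v_gr)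
  have hUclosed : ∀ (t : ℕ) (x : D.g), ∀ u ∈ U, K.ρ t x u ∈ U := by
    intro t x u hu
    rw [hU] at hu
    refine Submodule.iSup_induction W (motive := fun u => K.ρ t x u ∈ U) hu ?_ ?_ ?_
    · rintro s w ⟨hw1, hw2⟩
      refine hWle (s + t) ⟨K.map_gr t x s w hw1, ?_⟩
      show f (K.ρ t x w) ∈ G (s + t)
      rw [hf t x w]
      exact hGmap t x s (f w) hw2
    · show K.ρ t x 0 ∈ U
      rw [map_zero]; exact U.zero_mem
    · intro a b ha hb
      show K.ρ t x (a + b) ∈ U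
      rw [map_add]; exact U.add_mem ha hb
  have hUtop : U = ⊤ := K.cyclic U hvU hUclosed
  -- everything satisfies the componentwise property
  have hmain : ∀ u : K.V, ∀ s : ℕ, f (π s u) ∈ G s := by
    intro u s
    have hu : u ∈ ⨆ s, W s := by rw [← hU, hUtop]; exact Submodule.mem_top
    refine Submodule.iSup_induction W (motive := fun u => f (π s u) ∈ G s) hu ?_ ?_ ?_
    · rintro s' w ⟨hw1, hw2⟩
      show f (π s w) ∈ G s
      rcases eq_or_ne s' s with h | h
      · rw [hπ_same s w (h ▸ hw1)]
        exact h ▸ hw2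
      · rw [hπ_ne s s' h w hw1, map_zero]
        exact (G s).zero_mem
    · show f (π s 0) ∈ G s
      rw [map_zero, map_zero]; exact (G s).zero_mem
    · intro a b ha hb
      show f (π s (a + b)) ∈ G s
      rw [map_add, map_add]; exact (G s).add_mem ha hb
  refine ⟨f, hfv, hf, ?_⟩
  intro s u hu
  have h := hmain u s
  rwa [hπ_same s u hu] at h

end KRPaper
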